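/- Let L be a simple line arrangement of n ≥ 3 lines, let u, v be distinct vertices of G_L, and let s be the number of lines l ∈ L that separate u and v (i.e., u and v lie in the two different open half-planes bounded by l). If u and v lie on a common line of L then d(u,v) ≥ s + 1, and otherwise d(u,v) ≥ s + 2. -/

import Mathlib

/-- A line in the Euclidean plane `ℝ × ℝ`, given by an affine equation. -/
def IsLine (l : Set (ℝ × ℝ)) : Prop :=
  ∃ a b c : ℝ, (a, b) ≠ (0, 0) ∧ l = {p : ℝ × ℝ | a * p.1 + b * p.2 = c}

/-- A simple line arrangement of `n` lines in the Euclidean plane: `n` distinct lines,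
every two of which meet in exactly one point, and no point lies on three of the lines. -/
structure SimpleLineArrangement (n : ℕ) where
  lines : Finset (Set (ℝ × ℝ))
  card_lines : lines.card = n
  isLine : ∀ l ∈ lines, IsLine l
  meet : ∀ l₁ ∈ lines, ∀ l₂ ∈ lines, l₁ ≠ l₂ → ∃! p : ℝ × ℝ, p ∈ l₁ ∩ l₂
  simple : ∀ p : ℝ × ℝ, ∀ l₁ ∈ lines, ∀ l₂ ∈ lines, ∀ l₃ ∈ lines,
    p ∈ l₁ → p ∈ l₂ → p ∈ l₃ → l₁ = l₂ ∨ l₁ = l₃ ∨ l₂ = l₃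

namespace SimpleLineArrangement

variable {n : ℕ}

/-- The vertex set of the arrangement: all intersection points of pairs of lines. -/
def verts (A : SimpleLineArrangement n) : Set (ℝ × ℝ) :=
  {p | ∃ l₁ ∈ A.lines, ∃ l₂ ∈ A.lines, l₁ ≠ l₂ ∧ p ∈ l₁ ∧ p ∈ l₂}

/-- The arrangement graph: two distinct vertices are adjacent iff some line of the
arrangement contains both and no other vertex lies strictly between them on that line. -/
def graph (A : SimpleLineArrangement n) : SimpleGraph (ℝ × ℝ) where
  Adj u v := u ≠ v ∧ u ∈ A.verts ∧ v ∈ A.verts ∧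
    ∃ l ∈ A.lines, u ∈ l ∧ v ∈ l ∧ ∀ w ∈ A.verts, w ∈ l → ¬ Sbtw ℝ u w v
  symm := by
    constructor
    rintro u v ⟨huv, hu, hv, l, hl, hul, hvl, hbet⟩
    exact ⟨huv.symm, hv, hu, l, hl, hvl, hul, fun w hw hwl hb => hbet w hw hwl hb.symm⟩
  loopless := by constructor; rintro u ⟨h, -⟩; exact h rfl

/-- The degree of a vertex in the arrangement graph. -/
noncomputable def deg (A : SimpleLineArrangement n) (v : ℝ × ℝ) : ℕ :=
  {w | A.graph.Adj v w}.ncard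

/-- The number of vertices of the arrangement graph having degree `i`. -/
noncomputable def degCount (A : SimpleLineArrangement n) (i : ℕ) : ℕ :=
  {v | v ∈ A.verts ∧ A.deg v = i}.ncard

/-- The eccentricity of a vertex: the maximum graph distance to a vertex. -/
noncomputable def ecc (A : SimpleLineArrangement n) (u : ℝ × ℝ) : ℕ :=
  sSup ((fun v => A.graph.dist u v) '' A.verts)

/-- The realization `R(L)`: the union of the closed segments joining adjacent vertices. -/
def realization (A : SimpleLineArrangement n) : Set (ℝ × ℝ) :=
  ⋃ (u : ℝ × ℝ) (v : ℝ × ℝ) (_ : A.graph.Adj u v), segment ℝ u v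

/-- A point lies on the outer face of the realization if it belongs to the closure of
the unbounded connected component of the complement of the realization. -/
def OnOuterFace (A : SimpleLineArrangement n) (p : ℝ × ℝ) : Prop :=
  ∃ q : ℝ × ℝ, q ∉ A.realization ∧
    ¬ Bornology.IsBounded (connectedComponentIn (A.realization)ᶜ q) ∧
    p ∈ closure (connectedComponentIn (A.realization)ᶜ q)

end SimpleLineArrangement

/-- The line `l` separates the points `u` and `v`: they lie in the two different
open half-planes bounded by `l`. -/
def SeparatedBy (l : Set (ℝ × ℝ)) (u v : ℝ × ℝ) : Prop :=
  ∃ a b c : ℝ, (a, b) ≠ (0, 0) ∧ l = {p : ℝ × ℝ | a * p.1 + b * p.2 = c} ∧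
    (a * u.1 + b * u.2 - c) * (a * v.1 + b * v.2 - c) < 0

/-!
Fix a shortest walk `u = w₀, …, w_d = v`. Every line `m` not through `u` that the walk meets
before `v` has a first vertex `w_k ∈ m`, with `1 ≤ k < d`. This index determines `m`: if `m'` had
the same index, then `m`, `m'` and the line of the edge `w_{k-1} w_k` would all pass through `w_k`,
and the last differs from the other two because it contains `w_{k-1}`; as no three lines are
concurrent, `m = m'`. A separating line is met by the walk, since an edge cannot jump
over a line of the arrangement: the crossing point would be a vertex strictly inside the edge.
Hence `s ≤ d - 1`. If `u` and `v` share no line, the line of the last edge is one more such line,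
and it does not separate `u` from `v`, so `s ≤ d - 2`.
-/

open AffineMap

lemma mul_fst_add_mul_snd_lineMap (a b : ℝ) (x y : ℝ × ℝ) (t : ℝ) :
    a * (lineMap x y t : ℝ × ℝ).1 + b * (lineMap x y t : ℝ × ℝ).2 =
      a * x.1 + b * x.2 + t * ((a * y.1 + b * y.2) - (a * x.1 + b * x.2)) := by
  simp only [lineMap_apply_module, Prod.fst_add, Prod.snd_add, Prod.smul_fst, Prod.smul_snd,
    smul_eq_mul]
  ring

lemma IsLine.lineMap_mem {l : Set (ℝ × ℝ)} (hl : IsLine l) {x y : ℝ × ℝ} (hx : x ∈ l)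
    (hy : y ∈ l) (t : ℝ) : lineMap x y t ∈ l := by
  obtain ⟨a, b, c, -, rfl⟩ := hl
  simp only [Set.mem_ofPred_eq, mul_fst_add_mul_snd_lineMap] at hx hy ⊢
  rw [hx, hy]
  ring

lemma exists_lineMap_eq_of_mul_neg {a b c : ℝ} {x y : ℝ × ℝ}
    (h : (a * x.1 + b * x.2 - c) * (a * y.1 + b * y.2 - c) < 0) :
    ∃ t ∈ Set.Ioo (0 : ℝ) 1,
      a * (lineMap x y t : ℝ × ℝ).1 + b * (lineMap x y t : ℝ × ℝ).2 = c := by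
  set fx := a * x.1 + b * x.2 - c
  set fy := a * y.1 + b * y.2 - c
  have hfx : 0 < fx ^ 2 := sq_pos_of_ne_zero (left_ne_zero_of_mul h.ne)
  have hden : fx ^ 2 < fx ^ 2 - fx * fy := by linarith
  have hne : fx - fy ≠ 0 := right_ne_zero_of_mul (a := fx) (by nlinarith)
  -- `t = fx / (fx - fy)`, with numerator and denominator multiplied by `fx` to make both positive
  refine ⟨fx ^ 2 / (fx ^ 2 - fx * fy),
    ⟨div_pos hfx (hfx.trans hden), (div_lt_one (hfx.trans hden)).2 hden⟩, ?_⟩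
  rw [mul_fst_add_mul_snd_lineMap, show a * x.1 + b * x.2 = fx + c by ring,
    show a * y.1 + b * y.2 = fy + c by ring]
  field_simp
  ring

lemma SeparatedBy.left_notMem {l : Set (ℝ × ℝ)} {u v : ℝ × ℝ} (h : SeparatedBy l u v) :
    u ∉ l := by
  obtain ⟨a, b, c, -, rfl, h⟩ := h
  intro (hu : a * u.1 + b * u.2 = c)
  rw [hu, sub_self, zero_mul] at h
  exact lt_irrefl 0 h

lemma SeparatedBy.right_notMem {l : Set (ℝ × ℝ)} {u v : ℝ × ℝ} (h : SeparatedBy l u v) :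
    v ∉ l := by
  obtain ⟨a, b, c, hab, hl, h⟩ := h
  exact SeparatedBy.left_notMem ⟨a, b, c, hab, hl, by rwa [mul_comm]⟩

namespace SimpleGraph.Walk

variable {V : Type*} {G : SimpleGraph V} {u v : V} (p : G.Walk u v) {s : Set V} {k : ℕ}

/-- The first index at which `p` visits `s`; junk value `0` if it never does. -/
noncomputable def firstHit (s : Set V) : ℕ :=
  sInf {k | p.getVert k ∈ s}

lemma getVert_firstHit_mem (h : p.getVert k ∈ s) : p.getVert (p.firstHit s) ∈ s :=
  Nat.sInf_mem (s := {k | p.getVert k ∈ s}) ⟨k, h⟩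

lemma firstHit_le (h : p.getVert k ∈ s) : p.firstHit s ≤ k :=
  Nat.sInf_le h

lemma getVert_notMem_of_lt_firstHit (h : k < p.firstHit s) : p.getVert k ∉ s :=
  Nat.notMem_of_lt_sInf h

end SimpleGraph.Walk

namespace SimpleLineArrangement

variable {n : ℕ} (A : SimpleLineArrangement n)

lemma verts_finite : A.verts.Finite := by
  refine (A.lines.finite_toSet.biUnion fun l₁ hl₁ => (A.lines.erase l₁).finite_toSet.biUnion
    fun l₂ hl₂ => ?_).subset (s := ⋃ l₁ ∈ A.lines, ⋃ l₂ ∈ A.lines.erase l₁, l₁ ∩ l₂) ?_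
  · obtain ⟨hne, hl₂⟩ := Finset.mem_erase.1 hl₂
    obtain ⟨z, -, hz⟩ := A.meet l₁ hl₁ l₂ hl₂ hne.symm
    exact Set.Subsingleton.finite fun x hx y hy => (hz x hx).trans (hz y hy).symm
  · rintro p ⟨l₁, hl₁, l₂, hl₂, hne, hp₁, hp₂⟩
    simp only [Set.mem_iUnion]
    exact ⟨l₁, hl₁, l₂, Finset.mem_erase.2 ⟨hne.symm, hl₂⟩, hp₁, hp₂⟩

def vertsBetween (l : Set (ℝ × ℝ)) (x y : ℝ × ℝ) : Set (ℝ × ℝ) :=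
  {z | z ∈ A.verts ∧ z ∈ l ∧ Sbtw ℝ x z y}

lemma adj_of_vertsBetween_eq_empty {l : Set (ℝ × ℝ)} (hl : l ∈ A.lines) {x y : ℝ × ℝ}
    (hxy : x ≠ y) (hx : x ∈ A.verts) (hy : y ∈ A.verts) (hxl : x ∈ l) (hyl : y ∈ l)
    (h : A.vertsBetween l x y = ∅) : A.graph.Adj x y :=
  ⟨hxy, hx, hy, l, hl, hxl, hyl, fun _ hw hwl hs => h.subset ⟨hw, hwl, hs⟩⟩

lemma vertsBetween_ssubset_left {l : Set (ℝ × ℝ)} {x y z : ℝ × ℝ}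
    (hz : z ∈ A.vertsBetween l x y) : A.vertsBetween l x z ⊂ A.vertsBetween l x y :=
  LE.le.ssubset_of_mem_notMem (fun _ ⟨hwv, hwl, hxwz⟩ => ⟨hwv, hwl, hz.2.2.trans_left hxwz⟩) hz
    fun h => h.2.2.ne_right rfl

lemma vertsBetween_ssubset_right {l : Set (ℝ × ℝ)} {x y z : ℝ × ℝ}
    (hz : z ∈ A.vertsBetween l x y) : A.vertsBetween l z y ⊂ A.vertsBetween l x y :=
  LE.le.ssubset_of_mem_notMem (fun _ ⟨hwv, hwl, hzwy⟩ => ⟨hwv, hwl, hz.2.2.trans_right hzwy⟩) hz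
    fun h => h.2.2.left_ne rfl

lemma reachable_of_mem_line {l : Set (ℝ × ℝ)} (hl : l ∈ A.lines) {x y : ℝ × ℝ}
    (hx : x ∈ A.verts) (hy : y ∈ A.verts) (hxl : x ∈ l) (hyl : y ∈ l) :
    A.graph.Reachable x y := by
  induction hN : (A.vertsBetween l x y).ncard using Nat.strong_induction_on
    generalizing x y with
  | _ N ih =>
  by_cases hxy : x = y
  · exact hxy ▸ SimpleGraph.Reachable.refl x
  rcases (A.vertsBetween l x y).eq_empty_or_nonempty with hemp | ⟨z, hz⟩
  · exact (A.adj_of_vertsBetween_eq_empty hl hxy hx hy hxl hyl hemp).reachable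
  have hfin : (A.vertsBetween l x y).Finite := A.verts_finite.subset fun z hz => hz.1
  have hxz := ih _ (hN ▸ Set.ncard_lt_ncard (A.vertsBetween_ssubset_left hz) hfin) hx hz.1 hxl
    hz.2.1 rfl
  have hzy := ih _ (hN ▸ Set.ncard_lt_ncard (A.vertsBetween_ssubset_right hz) hfin) hz.1 hy
    hz.2.1 hyl rfl
  exact hxz.trans hzy

lemma reachable {u v : ℝ × ℝ} (hu : u ∈ A.verts) (hv : v ∈ A.verts) :
    A.graph.Reachable u v := by
  obtain ⟨l, hl, -, -, -, hul, -⟩ := id hu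
  obtain ⟨m, hm, -, -, -, hvm, -⟩ := id hv
  by_cases hlm : l = m
  · subst hlm
    exact A.reachable_of_mem_line hl hu hv hul hvm
  obtain ⟨q, hq, -⟩ := A.meet l hl m hm hlm
  have hqv : q ∈ A.verts := ⟨l, hl, m, hm, hlm, hq⟩
  exact (A.reachable_of_mem_line hl hu hqv hul hq.1).trans
    (A.reachable_of_mem_line hm hqv hv hq.2 hvm)

lemma mul_nonneg_of_adj {x y : ℝ × ℝ} (hxy : A.graph.Adj x y) {a b c : ℝ}
    (hm : {p : ℝ × ℝ | a * p.1 + b * p.2 = c} ∈ A.lines) :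
    0 ≤ (a * x.1 + b * x.2 - c) * (a * y.1 + b * y.2 - c) := by
  obtain ⟨hxy, -, -, l, hl, hxl, hyl, hbtw⟩ := hxy
  by_contra! hneg
  obtain ⟨t, ht, hzm⟩ := exists_lineMap_eq_of_mul_neg hneg
  have hlm : l ≠ {p : ℝ × ℝ | a * p.1 + b * p.2 = c} := by
    rintro rfl
    rw [show a * x.1 + b * x.2 = c from hxl, sub_self, zero_mul] at hneg
    exact lt_irrefl 0 hneg
  have hzl := (A.isLine l hl).lineMap_mem hxl hyl t
  exact hbtw _ ⟨l, hl, _, hm, hlm, hzl, hzm⟩ hzl (sbtw_lineMap_iff.2 ⟨hxy, ht⟩)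

lemma exists_mem_support_of_mul_neg {a b c : ℝ}
    (hm : {p : ℝ × ℝ | a * p.1 + b * p.2 = c} ∈ A.lines) {u v : ℝ × ℝ} (p : A.graph.Walk u v)
    (h : (a * u.1 + b * u.2 - c) * (a * v.1 + b * v.2 - c) < 0) :
    ∃ w ∈ p.support, a * w.1 + b * w.2 = c := by
  induction p with
  | nil => exact absurd h (not_lt.2 (mul_self_nonneg _))
  | @cons x y v hxy q ih =>
    by_cases hy : a * y.1 + b * y.2 = c
    · exact ⟨y, List.mem_cons_of_mem x q.start_mem_support, hy⟩
    have hfy : 0 < (a * y.1 + b * y.2 - c) ^ 2 := sq_pos_of_ne_zero (sub_ne_zero.2 hy)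
    have hxy := A.mul_nonneg_of_adj hxy hm
    obtain ⟨w, hw, hwm⟩ := ih (by nlinarith)
    exact ⟨w, List.mem_cons_of_mem x hw, hwm⟩

lemma eq_of_adj_of_mem {x y : ℝ × ℝ} (hxy : A.graph.Adj x y) {m m' : Set (ℝ × ℝ)}
    (hm : m ∈ A.lines) (hm' : m' ∈ A.lines) (hym : y ∈ m) (hym' : y ∈ m') (hxm : x ∉ m)
    (hxm' : x ∉ m') : m = m' := by
  obtain ⟨-, -, -, l, hl, hxl, hyl, -⟩ := hxy
  rcases A.simple y l hl m hm m' hm' hyl hym hym' with rfl | rfl | h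
  · exact absurd hxl hxm
  · exact absurd hxl hxm'
  · exact h

def linesEnteredBy {u v : ℝ × ℝ} (p : A.graph.Walk u v) : Set (Set (ℝ × ℝ)) :=
  {m | m ∈ A.lines ∧ u ∉ m ∧ ∃ k < p.length, p.getVert k ∈ m}

variable {A} in
lemma firstHit_spec_of_mem_linesEnteredBy {u v : ℝ × ℝ} {p : A.graph.Walk u v}
    {m : Set (ℝ × ℝ)} (hm : m ∈ A.linesEnteredBy p) :
    p.firstHit m ∈ Set.Ico 1 p.length ∧ p.getVert (p.firstHit m) ∈ m ∧
      p.getVert (p.firstHit m - 1) ∉ m := by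
  obtain ⟨-, hum, k, hk, hkm⟩ := hm
  have hpos : p.firstHit m ≠ 0 := fun h0 => hum (by
    simpa [h0] using p.getVert_firstHit_mem hkm)
  exact ⟨⟨Nat.one_le_iff_ne_zero.2 hpos, (p.firstHit_le hkm).trans_lt hk⟩,
    p.getVert_firstHit_mem hkm, p.getVert_notMem_of_lt_firstHit (Nat.sub_one_lt hpos)⟩

lemma injOn_firstHit_linesEnteredBy {u v : ℝ × ℝ} (p : A.graph.Walk u v) :
    Set.InjOn p.firstHit (A.linesEnteredBy p) := by
  intro m hm m' hm' heq
  obtain ⟨⟨hk, -⟩, hkm, hkm'⟩ := firstHit_spec_of_mem_linesEnteredBy hm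
  obtain ⟨⟨-, hlt⟩, hkm₂, hkm₂'⟩ := firstHit_spec_of_mem_linesEnteredBy hm'
  rw [← heq] at hkm₂ hkm₂' hlt
  have hadj := p.adj_getVert_succ (i := p.firstHit m - 1) (by omega)
  rw [Nat.sub_add_cancel hk] at hadj
  exact A.eq_of_adj_of_mem hadj hm.1 hm'.1 hkm hkm₂ hkm' hkm₂'

lemma ncard_linesEnteredBy_le {u v : ℝ × ℝ} (p : A.graph.Walk u v) :
    (A.linesEnteredBy p).ncard ≤ p.length - 1 :=
  calc (A.linesEnteredBy p).ncard ≤ (Set.Ico 1 p.length).ncard :=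
        Set.ncard_le_ncard_of_injOn p.firstHit
          (fun _ hm => (firstHit_spec_of_mem_linesEnteredBy hm).1)
          (A.injOn_firstHit_linesEnteredBy p) (Set.finite_Ico 1 p.length)
    _ = p.length - 1 := Set.ncard_Ico_nat 1 p.length

lemma separatedBy_mem_linesEnteredBy {u v : ℝ × ℝ} (p : A.graph.Walk u v) {m : Set (ℝ × ℝ)}
    (hm : m ∈ A.lines) (hsep : SeparatedBy m u v) : m ∈ A.linesEnteredBy p := by
  refine ⟨hm, hsep.left_notMem, ?_⟩
  obtain ⟨a, b, c, -, rfl, huv⟩ := id hsep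
  obtain ⟨w, hw, hwm⟩ := A.exists_mem_support_of_mul_neg hm p huv
  obtain ⟨k, rfl, hk⟩ := SimpleGraph.Walk.mem_support_iff_exists_getVert.1 hw
  refine ⟨k, lt_of_le_of_ne hk fun hkl => hsep.right_notMem ?_, hwm⟩
  rw [hkl, p.getVert_length] at hwm
  exact hwm

lemma exists_mem_linesEnteredBy {u v : ℝ × ℝ} (huv : u ≠ v) (p : A.graph.Walk u v)
    (hno : ¬ ∃ l ∈ A.lines, u ∈ l ∧ v ∈ l) : ∃ l ∈ A.linesEnteredBy p, v ∈ l := by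
  have hlen : p.length ≠ 0 := fun h => huv (p.eq_of_length_eq_zero h)
  have hadj := p.adj_getVert_succ (i := p.length - 1) (by omega)
  rw [Nat.sub_add_cancel (Nat.one_le_iff_ne_zero.2 hlen), p.getVert_length] at hadj
  obtain ⟨-, -, -, l, hl, hxl, hvl, -⟩ := hadj
  exact ⟨l, ⟨hl, fun hul => hno ⟨l, hl, hul, hvl⟩, _, by omega, hxl⟩, hvl⟩

end SimpleLineArrangement

theorem dist_ge_separating_lines_general (n : ℕ) (A : SimpleLineArrangement n)
    (u v : ℝ × ℝ) (hu : u ∈ A.verts) (hv : v ∈ A.verts) (huv : u ≠ v) :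
    ((∃ l ∈ A.lines, u ∈ l ∧ v ∈ l) →
      {l | l ∈ A.lines ∧ SeparatedBy l u v}.ncard + 1 ≤ A.graph.dist u v) ∧
    (¬ (∃ l ∈ A.lines, u ∈ l ∧ v ∈ l) →
      {l | l ∈ A.lines ∧ SeparatedBy l u v}.ncard + 2 ≤ A.graph.dist u v) := by
  obtain ⟨p, hp⟩ := (A.reachable hu hv).exists_walk_length_eq_dist
  rw [← hp]
  set S := {l | l ∈ A.lines ∧ SeparatedBy l u v}
  have hSfin : S.Finite := A.lines.finite_toSet.subset fun l hl => hl.1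
  have hEfin : (A.linesEnteredBy p).Finite := A.lines.finite_toSet.subset fun l hl => hl.1
  have hSE : S ⊆ A.linesEnteredBy p := fun l ⟨hl, hsep⟩ =>
    A.separatedBy_mem_linesEnteredBy p hl hsep
  have hE := A.ncard_linesEnteredBy_le p
  have hlen : p.length ≠ 0 := fun h => huv (p.eq_of_length_eq_zero h)
  refine ⟨fun _ => ?_, fun hno => ?_⟩
  · have := Set.ncard_le_ncard hSE hEfin
    omega
  · obtain ⟨l, hlE, hvl⟩ := A.exists_mem_linesEnteredBy huv p hno
    have hlS : l ∉ S := fun hlS => hlS.2.right_notMem hvl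
    have := Set.ncard_le_ncard (Set.insert_subset hlE hSE) hEfin
    rw [Set.ncard_insert_of_notMem hlS hSfin] at this
    omega

theorem dist_ge_separating_lines (n : ℕ) (hn : 3 ≤ n) (A : SimpleLineArrangement n)
    (u v : ℝ × ℝ) (hu : u ∈ A.verts) (hv : v ∈ A.verts) (huv : u ≠ v) :
    ((∃ l ∈ A.lines, u ∈ l ∧ v ∈ l) →
      {l | l ∈ A.lines ∧ SeparatedBy l u v}.ncard + 1 ≤ A.graph.dist u v) ∧
    (¬ (∃ l ∈ A.lines, u ∈ l ∧ v ∈ l) →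
      {l | l ∈ A.lines ∧ SeparatedBy l u v}.ncard + 2 ≤ A.graph.dist u v) :=
  dist_ge_separating_lines_general n A u v hu hv huv
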